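/- Let n ≥ 2, s ≥ 1 and p = 2s. Suppose that for every choice of points t_i ∈ ((i-1)/N, i/N], 1 ≤ i ≤ N, every ball B_R ⊂ ℝⁿ of radius R ≥ Nⁿ and ε > 0, the discrete restriction estimate ( |B_R|^{-1} ∫ |Σ_{i=1}^N e(x·(t_i, t_i², ..., t_iⁿ))|^{2s} w_{B_R} )^{1/(2s)} ≤ C_ε (N^{1/2+ε} + N^{1 - n(n+1)/(4s) + ε}) holds. Then for any real numbers X_1, ..., X_N with i-1 < X_i ≤ i, the number J̃_{s,n} of 2s-tuples from {X_1,...,X_N} satisfying |Σ_{j=1}^s X_{a_j}^i − Σ_{j=1}^s X_{b_j}^i| ≤ N^{i-n} for all 1 ≤ i ≤ n obeys J̃_{s,n} ≤ C'_ε (N^{s+ε} + N^{2s − n(n+1)/2 + ε}). -/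

import Mathlib

/-!
Write `F(x) = ∑ᵢ e(⟪x, γ(tᵢ)⟫)` with `tᵢ = Xᵢ / N` and `γ` the moment curve. Expanding
`|F|^{2s}` and integrating against the Gaussian `exp(-π‖x‖²/R²)`, whose Fourier transform is
again a positive Gaussian, gives exactly `Rⁿ ∑ exp(-π R² ‖Δ‖²)`, the sum running over all pairs
of `s`-tuples with `Δ = ∑ γ(t_{a_k}) - ∑ γ(t_{b_k})`. For `R = Nⁿ` every tuple counted by
`J̃_{s,n}` has `R ‖Δ‖ ≤ √n`, so contributes at least `exp(-π n)`. On the other hand the Gaussian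
is dominated by a constant multiple of the weight `(1 + ‖x‖/R)^{-100n}`, so the restriction
estimate on the ball `B(0, R)` bounds the integral by `Rⁿ (C_ε (N^{1/2+ε} + …))^{2s}`.
-/

open MeasureTheory Metric Complex Real
open scoped RealInnerProductSpace ComplexConjugate

theorem ofReal_norm_sum_pow_two_mul {ι : Type*} [Fintype ι] (z : ι → ℂ) (s : ℕ) :
    ((‖∑ i, z i‖ ^ (2 * s) : ℝ) : ℂ) =
      ∑ p : (Fin s → ι) × (Fin s → ι), ∏ k, z (p.1 k) * conj (z (p.2 k)) := by
  rw [pow_mul, ofReal_pow, ofReal_pow, ← mul_conj', mul_pow, map_sum, Fintype.sum_pow,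
    Fintype.sum_pow, Finset.sum_mul_sum, ← Finset.univ_product_univ, Finset.sum_product]
  simp only [Finset.prod_mul_distrib]

theorem conj_cexp_two_pi_I_mul (θ : ℝ) :
    conj (cexp (2 * π * I * θ)) = cexp (2 * π * I * (-θ : ℝ)) := by
  rw [← Complex.exp_conj]
  simp [map_ofNat]

theorem rexp_neg_pi_mul_sq_le {u m : ℝ} (hu : 0 ≤ u) (hm : 0 ≤ m) :
    rexp (-π * u ^ 2) ≤ rexp (m ^ 2 / (4 * π)) * (1 + u) ^ (-m) := by
  have h1u : 0 < 1 + u := by linarith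
  rw [Real.rpow_neg h1u.le, le_mul_inv_iff₀ (by positivity)]
  calc rexp (-π * u ^ 2) * (1 + u) ^ m ≤ rexp (-π * u ^ 2) * rexp u ^ m := by
        gcongr; linarith [Real.add_one_le_exp u]
    _ = rexp (-π * u ^ 2 + u * m) := by rw [← Real.exp_mul, ← Real.exp_add]
    _ ≤ rexp (m ^ 2 / (4 * π)) := by
        gcongr
        rw [le_div_iff₀ (by positivity)]
        -- complete the square
        nlinarith [pi_pos, sq_nonneg (2 * π * u - m)]

section ExpSum

variable {V : Type*} [NormedAddCommGroup V] [InnerProductSpace ℝ V] {ι : Type*} [Fintype ι]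

noncomputable def expSum (v : ι → V) (x : V) : ℂ :=
  ∑ i, cexp (2 * π * I * (⟪x, v i⟫ : ℝ))

def tupleSumDiff {s : ℕ} (v : ι → V) (p : (Fin s → ι) × (Fin s → ι)) : V :=
  ∑ k, v (p.1 k) - ∑ k, v (p.2 k)

theorem ofReal_norm_expSum_pow (v : ι → V) (s : ℕ) (x : V) :
    ((‖expSum v x‖ ^ (2 * s) : ℝ) : ℂ) =
      ∑ p : (Fin s → ι) × (Fin s → ι), cexp (2 * π * I * (⟪x, tupleSumDiff v p⟫ : ℝ)) := by
  rw [expSum, ofReal_norm_sum_pow_two_mul]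
  refine Finset.sum_congr rfl fun p _ => ?_
  simp only [conj_cexp_two_pi_I_mul, ← Complex.exp_add, ← Complex.exp_sum, tupleSumDiff,
    inner_sub_right, inner_sum]
  push_cast
  rw [mul_sub, Finset.mul_sum, Finset.mul_sum, ← Finset.sum_sub_distrib]
  ring_nf

theorem norm_expSum_le (v : ι → V) (x : V) : ‖expSum v x‖ ≤ Fintype.card ι := by
  refine (norm_sum_le _ _).trans_eq ?_
  simp [Complex.norm_exp]

theorem continuous_expSum (v : ι → V) : Continuous (expSum v) := by
  unfold expSum; fun_prop

variable [FiniteDimensional ℝ V] [MeasurableSpace V] [BorelSpace V]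

theorem toReal_volume_ball_pos (x : V) {r : ℝ} (hr : 0 < r) : 0 < (volume (ball x r)).toReal :=
  ENNReal.toReal_pos (measure_ball_pos _ _ hr).ne' measure_ball_lt_top.ne

theorem integral_cexp_inner_mul_gaussian {R : ℝ} (hR : 0 < R) (w : V) :
    ∫ x : V, cexp (2 * π * I * (⟪x, w⟫ : ℝ)) * (rexp (-π * ‖x‖ ^ 2 / R ^ 2) : ℂ) =
      ((R ^ Module.finrank ℝ V * rexp (-π * R ^ 2 * ‖w‖ ^ 2) : ℝ) : ℂ) := by
  have hb : 0 < ((π / R ^ 2 : ℝ) : ℂ).re := by rw [ofReal_re]; positivity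
  have hR' : (R : ℂ) ≠ 0 := ofReal_ne_zero.mpr hR.ne'
  have hπ : (π : ℂ) ≠ 0 := ofReal_ne_zero.mpr pi_ne_zero
  have hpow : ((π : ℂ) / ((π / R ^ 2 : ℝ) : ℂ)) ^ (Module.finrank ℝ V / 2 : ℂ) =
      ((R ^ Module.finrank ℝ V : ℝ) : ℂ) := by
    rw [show (π : ℂ) / ((π / R ^ 2 : ℝ) : ℂ) = ((R ^ 2 : ℝ) : ℂ) by push_cast; field_simp,
      show (Module.finrank ℝ V / 2 : ℂ) = ((Module.finrank ℝ V / 2 : ℝ) : ℂ) by push_cast; rfl,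
      ← ofReal_cpow (by positivity), ← Real.rpow_natCast R 2, ← Real.rpow_mul hR.le,
      show ((2 : ℕ) : ℝ) * (Module.finrank ℝ V / 2) = Module.finrank ℝ V by push_cast; ring,
      Real.rpow_natCast]
  convert GaussianFourier.integral_cexp_neg_mul_sq_norm_add hb (2 * π * I) w using 1
  · congr 1 with x
    rw [ofReal_exp, ← Complex.exp_add, real_inner_comm]
    push_cast
    ring_nf
  · rw [hpow, ofReal_mul, ofReal_exp]
    congr 2
    push_cast
    field_simp
    rw [I_sq]
    ring

theorem integral_norm_expSum_pow_mul_gaussian (v : ι → V) (s : ℕ) {R : ℝ} (hR : 0 < R) :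
    ∫ x : V, ‖expSum v x‖ ^ (2 * s) * rexp (-π * ‖x‖ ^ 2 / R ^ 2) =
      R ^ Module.finrank ℝ V *
        ∑ p : (Fin s → ι) × (Fin s → ι), rexp (-π * R ^ 2 * ‖tupleSumDiff v p‖ ^ 2) := by
  apply ofReal_injective
  rw [← integral_complex_ofReal, Finset.mul_sum, ofReal_sum]
  simp_rw [ofReal_mul, ofReal_norm_expSum_pow, Finset.sum_mul]
  rw [integral_finsetSum _ fun p _ => Integrable.of_integral_ne_zero ?_]
  · exact Finset.sum_congr rfl fun p _ => by rw [integral_cexp_inner_mul_gaussian hR, ofReal_mul]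
  · rw [integral_cexp_inner_mul_gaussian hR]
    exact ofReal_ne_zero.mpr (by positivity)

theorem ncard_mul_pow_le_integral_gaussian (v : ι → V) {s : ℕ} {R ρ : ℝ} (hR : 0 < R)
    {S : Set ((Fin s → ι) × (Fin s → ι))} (hS : ∀ p ∈ S, R ^ 2 * ‖tupleSumDiff v p‖ ^ 2 ≤ ρ) :
    S.ncard * R ^ Module.finrank ℝ V ≤
      rexp (π * ρ) * ∫ x : V, ‖expSum v x‖ ^ (2 * s) * rexp (-π * ‖x‖ ^ 2 / R ^ 2) := by
  classical
  let f (p : (Fin s → ι) × (Fin s → ι)) :=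
    rexp (π * ρ) * rexp (-π * R ^ 2 * ‖tupleSumDiff v p‖ ^ 2)
  have hf : ∀ p ∈ S.toFinset, 1 ≤ f p := fun p hp => by
    dsimp only [f]
    rw [← Real.exp_add, Real.one_le_exp_iff]
    nlinarith [hS p (Set.mem_toFinset.mp hp), pi_pos]
  have hcard : (S.ncard : ℝ) ≤ ∑ p, f p := calc
    (S.ncard : ℝ) = S.toFinset.card • (1 : ℝ) := by simp [Set.ncard_eq_toFinset_card']
    _ ≤ ∑ p ∈ S.toFinset, f p := Finset.card_nsmul_le_sum _ _ _ hf
    _ ≤ ∑ p, f p := Finset.sum_le_sum_of_subset_of_nonneg (Finset.subset_univ _)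
      fun p _ _ => by positivity
  calc S.ncard * R ^ Module.finrank ℝ V ≤ (∑ p, f p) * R ^ Module.finrank ℝ V := by gcongr
    _ = _ := by
      rw [integral_norm_expSum_pow_mul_gaussian v s hR, Finset.sum_mul, Finset.mul_sum,
        Finset.mul_sum]
      exact Finset.sum_congr rfl fun p _ => by ring

theorem integrable_norm_expSum_pow_mul_weight (v : ι → V) (s : ℕ) {R m : ℝ} (hR : 0 < R)
    (hm : Module.finrank ℝ V < m) :
    Integrable fun x : V => ‖expSum v x‖ ^ (2 * s) * (1 + ‖x‖ / R) ^ (-m) := by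
  have hw : Integrable fun x : V => (1 + ‖x‖ / R) ^ (-m) := by
    convert (integrable_one_add_norm (μ := volume) hm).comp_smul (inv_ne_zero hR.ne')
      using 2 with x
    rw [norm_smul, norm_inv, Real.norm_of_nonneg hR.le, inv_mul_eq_div]
  refine hw.bdd_mul (c := (Fintype.card ι : ℝ) ^ (2 * s))
    ((continuous_expSum v).norm.pow _).aestronglyMeasurable (ae_of_all _ fun x => ?_)
  rw [norm_pow, norm_norm]
  exact pow_le_pow_left₀ (norm_nonneg _) (norm_expSum_le v x) _

theorem integral_norm_expSum_pow_mul_gaussian_le (v : ι → V) (s : ℕ) {R m : ℝ} (hR : 0 < R)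
    (hm : Module.finrank ℝ V < m) :
    ∫ x : V, ‖expSum v x‖ ^ (2 * s) * rexp (-π * ‖x‖ ^ 2 / R ^ 2) ≤
      rexp (m ^ 2 / (4 * π)) * ∫ x : V, ‖expSum v x‖ ^ (2 * s) * (1 + ‖x‖ / R) ^ (-m) := by
  have hm0 : 0 ≤ m := (Nat.cast_nonneg _).trans hm.le
  rw [← integral_const_mul]
  refine integral_mono_of_nonneg (ae_of_all _ fun x => by positivity)
    ((integrable_norm_expSum_pow_mul_weight v s hR hm).const_mul _) (ae_of_all _ fun x => ?_)
  have hgauss := rexp_neg_pi_mul_sq_le (u := ‖x‖ / R) (by positivity) hm0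
  rw [div_pow, ← mul_div_assoc] at hgauss
  dsimp only
  rw [mul_left_comm]
  gcongr

theorem ncard_le_of_weighted_moment_le (v : ι → V) {s : ℕ} (hs : 0 < s) {R m ρ M : ℝ}
    (hR : 0 < R) (hm : Module.finrank ℝ V < m)
    {S : Set ((Fin s → ι) × (Fin s → ι))} (hS : ∀ p ∈ S, R ^ 2 * ‖tupleSumDiff v p‖ ^ 2 ≤ ρ)
    (hM : ((volume (ball (0 : V) R)).toReal⁻¹ *
        ∫ x : V, ‖expSum v x‖ ^ (2 * s : ℝ) * (1 + dist x 0 / R) ^ (-m)) ^ (1 / (2 * s : ℝ))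
      ≤ M) :
    S.ncard ≤ rexp (π * ρ) * rexp (m ^ 2 / (4 * π)) * (volume (ball (0 : V) 1)).toReal *
      M ^ (2 * s) := by
  set I := ∫ x : V, ‖expSum v x‖ ^ (2 * s) * (1 + ‖x‖ / R) ^ (-m)
  have hvol : (volume (ball (0 : V) R)).toReal =
      R ^ Module.finrank ℝ V * (volume (ball (0 : V) 1)).toReal := by
    rw [Measure.addHaar_ball_of_pos _ _ hR, ENNReal.toReal_mul,
      ENNReal.toReal_ofReal (by positivity)]
  have hV1 := toReal_volume_ball_pos (0 : V) one_pos
  have hI : 0 ≤ I := integral_nonneg fun x => by positivity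
  simp_rw [dist_zero_right, show (2 * s : ℝ) = (2 * s : ℕ) by push_cast; rfl, Real.rpow_natCast,
    hvol, one_div] at hM
  rw [Real.rpow_inv_le_iff_of_pos (by positivity) ((Real.rpow_nonneg (by positivity) _).trans hM)
    (by positivity), Real.rpow_natCast, inv_mul_le_iff₀ (by positivity)] at hM
  refine le_of_mul_le_mul_right ?_ (pow_pos hR (Module.finrank ℝ V))
  calc S.ncard * R ^ Module.finrank ℝ V
      ≤ rexp (π * ρ) * ∫ x : V, ‖expSum v x‖ ^ (2 * s) * rexp (-π * ‖x‖ ^ 2 / R ^ 2) :=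
        ncard_mul_pow_le_integral_gaussian v hR hS
    _ ≤ rexp (π * ρ) * (rexp (m ^ 2 / (4 * π)) * I) := by
        gcongr; exact integral_norm_expSum_pow_mul_gaussian_le v s hR hm
    _ ≤ rexp (π * ρ) * (rexp (m ^ 2 / (4 * π)) *
          (R ^ Module.finrank ℝ V * (volume (ball (0 : V) 1)).toReal * M ^ (2 * s))) := by
        gcongr
    _ = _ := by ring

end ExpSum

def momentCurve (n : ℕ) (t : ℝ) : EuclideanSpace ℝ (Fin n) :=
  WithLp.toLp 2 fun j => t ^ (j.1 + 1)

theorem inner_momentCurve {n : ℕ} (x : EuclideanSpace ℝ (Fin n)) (t : ℝ) :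
    ⟪x, momentCurve n t⟫ = ∑ j, x j * t ^ (j.1 + 1) := by
  simp [momentCurve, PiLp.inner_apply, mul_comm]

theorem tupleSumDiff_momentCurve_apply {n N s : ℕ} (t : Fin N → ℝ)
    (p : (Fin s → Fin N) × (Fin s → Fin N)) (j : Fin n) :
    tupleSumDiff (fun i => momentCurve n (t i)) p j =
      ∑ k, t (p.1 k) ^ (j.1 + 1) - ∑ k, t (p.2 k) ^ (j.1 + 1) := by
  simp [tupleSumDiff, momentCurve]

theorem sq_norm_le_card_mul_sq {κ : Type*} [Fintype κ] {x : EuclideanSpace ℝ κ} {r : ℝ}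
    (h : ∀ j, |x j| ≤ r) : ‖x‖ ^ 2 ≤ Fintype.card κ * r ^ 2 := by
  rw [EuclideanSpace.norm_sq_eq]
  calc ∑ j, ‖x j‖ ^ 2 ≤ ∑ _j : κ, r ^ 2 :=
        Finset.sum_le_sum fun j _ => pow_le_pow_left₀ (norm_nonneg _) (h j) 2
    _ = Fintype.card κ * r ^ 2 := by simp

theorem sq_pow_mul_sq_norm_tupleSumDiff_momentCurve_le {n N s : ℕ} (hN : 0 < N) (X : Fin N → ℝ)
    {p : (Fin s → Fin N) × (Fin s → Fin N)}
    (hp : ∀ i : Fin n, |∑ j, X (p.1 j) ^ (i.1 + 1) - ∑ j, X (p.2 j) ^ (i.1 + 1)|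
      ≤ (N : ℝ) ^ ((i.1 : ℝ) + 1 - n)) :
    ((N : ℝ) ^ n) ^ 2 * ‖tupleSumDiff (fun i => momentCurve n (X i / N)) p‖ ^ 2 ≤ n := by
  have hN0 : (0 : ℝ) < N := by exact_mod_cast hN
  have hcoord : ∀ j : Fin n,
      |tupleSumDiff (fun i => momentCurve n (X i / N)) p j| ≤ ((N : ℝ) ^ n)⁻¹ := fun j => by
    rw [tupleSumDiff_momentCurve_apply]
    simp only [div_pow, ← Finset.sum_div, ← sub_div, abs_div, abs_of_pos (pow_pos hN0 _)]
    calc _ ≤ (N : ℝ) ^ ((j.1 : ℝ) + 1 - n) / (N : ℝ) ^ (j.1 + 1) := by gcongr; exact hp j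
      _ = ((N : ℝ) ^ n)⁻¹ := by
        rw [Real.rpow_sub hN0, ← Nat.cast_add_one, Real.rpow_natCast, Real.rpow_natCast]
        field_simp
  calc ((N : ℝ) ^ n) ^ 2 * ‖tupleSumDiff (fun i => momentCurve n (X i / N)) p‖ ^ 2
      ≤ ((N : ℝ) ^ n) ^ 2 * (n * (((N : ℝ) ^ n)⁻¹) ^ 2) := by
        gcongr; simpa using sq_norm_le_card_mul_sq hcoord
    _ = (n : ℝ) := by field_simp

theorem mul_rpow_add_rpow_pow_le {N C : ℝ} (hN : 0 ≤ N) (hC : 0 ≤ C) (a b : ℝ) (k : ℕ) :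
    (C * (N ^ a + N ^ b)) ^ k ≤ C ^ k * 2 ^ (k - 1) * (N ^ (k * a) + N ^ (k * b)) := by
  rw [mul_pow, mul_assoc, mul_comm (k : ℝ) a, mul_comm (k : ℝ) b, Real.rpow_mul hN,
    Real.rpow_mul hN, Real.rpow_natCast, Real.rpow_natCast]
  gcongr
  exact add_pow_le (by positivity) (by positivity) k

/-- Corollary 4.2: if the discrete restriction estimate holds for all choices of
points `t_i ∈ ((i-1)/N, i/N]` and all balls of radius `R ≥ Nⁿ`, then for any
reals `X_i ∈ (i-1, i]` the number of `2s`-tuples satisfying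
`|Σ X_{a_j}^i − Σ X_{b_j}^i| ≤ N^{i-n}` for `1 ≤ i ≤ n` is at most
`C'_ε (N^{s+ε} + N^{2s−n(n+1)/2+ε})`. -/
theorem real_vinogradov_from_discrete_restriction (n s : ℕ) (hn : 2 ≤ n) (hs : 1 ≤ s)
    (H : ∀ ε : ℝ, 0 < ε → ∃ C : ℝ, 0 < C ∧ ∀ N : ℕ, 1 ≤ N →
      ∀ t : Fin N → ℝ, (∀ i : Fin N, (i.1 : ℝ) / N < t i ∧ t i ≤ ((i.1 : ℝ) + 1) / N) →
      ∀ R : ℝ, (N : ℝ) ^ n ≤ R → ∀ c : EuclideanSpace ℝ (Fin n),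
        ((volume (ball c R)).toReal⁻¹ *
          ∫ x : EuclideanSpace ℝ (Fin n),
            ‖∑ i : Fin N, Complex.exp (2 * (Real.pi : ℂ) * Complex.I *
              ((∑ j : Fin n, x j * t i ^ (j.1 + 1) : ℝ) : ℂ))‖ ^ (2 * s : ℝ) *
            (1 + dist x c / R) ^ (-(100 * (n : ℝ)))) ^ (1 / (2 * s : ℝ))
        ≤ C * ((N : ℝ) ^ ((1 : ℝ) / 2 + ε) +
               (N : ℝ) ^ (1 - (n : ℝ) * ((n : ℝ) + 1) / (4 * s) + ε))) :
    ∀ ε : ℝ, 0 < ε → ∃ C' : ℝ, 0 < C' ∧ ∀ N : ℕ, 1 ≤ N →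
      ∀ X : Fin N → ℝ, (∀ i : Fin N, (i.1 : ℝ) < X i ∧ X i ≤ (i.1 : ℝ) + 1) →
        ({p : (Fin s → Fin N) × (Fin s → Fin N) |
            ∀ i : Fin n,
              |(∑ j, X (p.1 j) ^ (i.1 + 1)) - (∑ j, X (p.2 j) ^ (i.1 + 1))|
                ≤ (N : ℝ) ^ (((i.1 : ℝ) + 1) - n)}.ncard : ℝ)
          ≤ C' * ((N : ℝ) ^ ((s : ℝ) + ε) +
                  (N : ℝ) ^ (2 * (s : ℝ) - (n : ℝ) * ((n : ℝ) + 1) / 2 + ε)) := by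
  intro ε hε
  have hs0 : (0 : ℝ) < s := by exact_mod_cast hs
  obtain ⟨C, hC, hH⟩ := H (ε / (2 * s)) (by positivity)
  refine ⟨rexp (π * n) * rexp ((100 * n) ^ 2 / (4 * π)) *
    (volume (ball (0 : EuclideanSpace ℝ (Fin n)) 1)).toReal * (C ^ (2 * s) * 2 ^ (2 * s - 1)),
    by have := toReal_volume_ball_pos (0 : EuclideanSpace ℝ (Fin n)) one_pos; positivity,
    fun N hN X hX => ?_⟩
  have hN0 : (0 : ℝ) < N := by exact_mod_cast hN
  have hM := hH N hN (fun i => X i / N)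
    (fun i => ⟨div_lt_div_of_pos_right (hX i).1 hN0, div_le_div_of_nonneg_right (hX i).2 hN0.le⟩)
    (N ^ n) le_rfl 0
  simp_rw [← inner_momentCurve] at hM
  have hcount := ncard_le_of_weighted_moment_le (fun i => momentCurve n (X i / N)) hs
    (pow_pos hN0 n) (by rw [finrank_euclideanSpace_fin]; norm_cast; omega)
    (fun p hp => sq_pow_mul_sq_norm_tupleSumDiff_momentCurve_le hN X hp) hM
  have hexp₁ : ((2 * s : ℕ) : ℝ) * (1 / 2 + ε / (2 * s)) = s + ε := by field_simp; push_cast; ring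
  have hexp₂ : ((2 * s : ℕ) : ℝ) * (1 - n * (n + 1) / (4 * s) + ε / (2 * s)) =
      2 * s - n * (n + 1) / 2 + ε := by field_simp; push_cast; ring
  refine hcount.trans ?_
  rw [mul_assoc _ (C ^ (2 * s) * _), ← hexp₁, ← hexp₂]
  gcongr
  exact mul_rpow_add_rpow_pow_le hN0.le hC.le _ _ _
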